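/- Let K ≥ 4 be a real number and M, N positive real numbers. Define u_0 = N, u_1 = (K − 1)·N − M, u_{n+1} = (K − 2)·u_n − u_{n−1}, and v_0 = M, v_1 = (K − 1)·M − K·N, v_{n+1} = (K − 2)·v_n − v_{n−1}. Then u_n > 0 and v_n > 0 for all n ≥ 0 if and only if ((K − √(K² − 4K))/2)·N ≤ M ≤ ((K + √(K² − 4K))/2)·N. -/
import Mathlib


/-- Untruncated irresolvable-subspace dimensions along Chain A:
`u_0 = N`, `u_1 = (K−1)·N − M`, `u_{n+1} = (K−2)·u_n − u_{n−1}`. -/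
def uSeq (K M N : ℝ) : ℕ → ℝ
  | 0 => N
  | 1 => (K - 1) * N - M
  | (n + 2) => (K - 2) * uSeq K M N (n + 1) - uSeq K M N n

/-- Untruncated irresolvable-subspace dimensions along Chain B:
`v_0 = M`, `v_1 = (K−1)·M − K·N`, `v_{n+1} = (K−2)·v_n − v_{n−1}`. -/
def vSeq (K M N : ℝ) : ℕ → ℝ
  | 0 => M
  | 1 => (K - 1) * M - K * N
  | (n + 2) => (K - 2) * vSeq K M N (n + 1) - vSeq K M N n

/-- If `w₁ ≥ β w₀ > 0`, the whole chain is positive. -/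
lemma chain_pos (K α β : ℝ) (w : ℕ → ℝ)
    (hrec : ∀ n, w (n + 2) = (K - 2) * w (n + 1) - w n)
    (hab : α * β = 1) (hsum : α + β = K - 2) (hβ : 0 < β)
    (h0 : 0 < w 0) (h1 : β * w 0 ≤ w 1) :
    ∀ n, 0 < w n := by
  have hα : 0 < α := by nlinarith
  have key : ∀ n, 0 < w n ∧ β * w n ≤ w (n + 1) := by
    intro n
    induction n with
    | zero => exact ⟨h0, h1⟩
    | succ n ih =>
      obtain ⟨hw, hb⟩ := ih
      have hw1 : 0 < w (n + 1) := lt_of_lt_of_le (mul_pos hβ hw) hb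
      refine ⟨hw1, ?_⟩
      have h2 := hrec n
      nlinarith [mul_le_mul_of_nonneg_left hb hα.le]
  exact fun n => (key n).1

/-- If `w₁ < β w₀`, the chain eventually becomes nonpositive. -/
lemma chain_neg (K α β : ℝ) (w : ℕ → ℝ)
    (hrec : ∀ n, w (n + 2) = (K - 2) * w (n + 1) - w n)
    (hab : α * β = 1) (hsum : α + β = K - 2) (hα : 1 ≤ α) (hβ1 : β ≤ 1)
    (hb0 : w 1 < β * w 0) (hpos : ∀ n, 0 < w n) : False := by
  set b0 : ℝ := β * w 0 - w 1 with hb0def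
  have hb0pos : 0 < b0 := by simp [hb0def]; linarith
  have key : ∀ n, b0 ≤ β * w n - w (n + 1) ∧ w n ≤ w 0 - n * b0 := by
    intro n
    induction n with
    | zero => exact ⟨le_refl _, by simp⟩
    | succ n ih =>
      obtain ⟨h1, h2⟩ := ih
      have hwn := hpos n
      have hwn1 := hpos (n + 1)
      have heq : β * w (n + 1) - w (n + 2) = α * (β * w n - w (n + 1)) := by
        rw [hrec n]
        linear_combination w (n + 1) * hsum - w 0 * hab + (w 0 - w n) * hab
      constructor
      · rw [heq]
        nlinarith
      · push_cast
        nlinarith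
  obtain ⟨n, hn⟩ := exists_nat_gt (w 0 / b0)
  have h1 : w 0 / b0 * b0 < (n : ℝ) * b0 := by
    exact mul_lt_mul_of_pos_right hn hb0pos
  rw [div_mul_cancel₀ _ (ne_of_gt hb0pos)] at h1
  have := (key n).2
  have := hpos n
  linarith

/-- For `K ≥ 4` and positive reals `M, N`, all terms of both the
Chain-A recursion `(u_n)` and the Chain-B recursion `(v_n)` are positive iff
`((K − √(K² − 4K))/2)·N ≤ M ≤ ((K + √(K² − 4K))/2)·N` (Region I). -/
theorem chainA_and_chainB_pos_iff_regionI (K M N : ℝ)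
    (hK : 4 ≤ K) (hM : 0 < M) (hN : 0 < N) :
    (∀ n : ℕ, 0 < uSeq K M N n ∧ 0 < vSeq K M N n) ↔
      ((K - Real.sqrt (K ^ 2 - 4 * K)) / 2 * N ≤ M ∧
        M ≤ (K + Real.sqrt (K ^ 2 - 4 * K)) / 2 * N) := by
  set s : ℝ := Real.sqrt (K ^ 2 - 4 * K) with hs
  have hs0 : 0 ≤ s := Real.sqrt_nonneg _
  have hs2 : s ^ 2 = K ^ 2 - 4 * K := Real.sq_sqrt (by nlinarith)
  have hsle : s < K - 2 := by nlinarith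
  set α : ℝ := (K - 2 + s) / 2 with hαdef
  set β : ℝ := (K - 2 - s) / 2 with hβdef
  have hab : α * β = 1 := by
    simp only [hαdef, hβdef]; nlinarith
  have hsum : α + β = K - 2 := by simp only [hαdef, hβdef]; ring
  have hα1 : 1 ≤ α := by simp only [hαdef]; linarith
  have hβ0 : 0 < β := by simp only [hβdef]; linarith
  have hβ1 : β ≤ 1 := by nlinarith
  have hurec : ∀ n, uSeq K M N (n + 2) =
      (K - 2) * uSeq K M N (n + 1) - uSeq K M N n := fun n => rfl
  have hvrec : ∀ n, vSeq K M N (n + 2) =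
      (K - 2) * vSeq K M N (n + 1) - vSeq K M N n := fun n => rfl
  have hu0 : uSeq K M N 0 = N := rfl
  have hu1 : uSeq K M N 1 = (K - 1) * N - M := rfl
  have hv0 : vSeq K M N 0 = M := rfl
  have hv1 : vSeq K M N 1 = (K - 1) * M - K * N := rfl
  -- relations between the bounds and β
  have hcA : (K + s) / 2 = K - 1 - β := by simp only [hβdef]; ring
  have hcB : (K - s) / 2 = β + 1 := by
    simp only [hβdef]
    nlinarith
  constructor
  · intro hpos
    constructor
    · by_contra h
      push_neg at h
      refine chain_neg K α β (vSeq K M N) hvrec hab hsum hα1 hβ1 ?_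
        (fun n => (hpos n).2)
      rw [hv0, hv1]
      -- need (K-1)*M - K*N < β*M, i.e. (K-1-β)*M < K*N
      -- (K-1-β) = (K+s)/2 = α+1, and (α+1)(β+1) = 1 + α + β + 1 = K
      have hprod : (K - 1 - β) * (β + 1) = K := by
        linear_combination -β * hsum + hab
      have hM' : M < (β + 1) * N := by
        rw [hcB] at h; linarith
      have hcApos : 0 < K - 1 - β := by nlinarith
      nlinarith [mul_lt_mul_of_pos_left hM' hcApos]
    · by_contra h
      push_neg at h
      refine chain_neg K α β (uSeq K M N) hurec hab hsum hα1 hβ1 ?_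
        (fun n => (hpos n).1)
      rw [hu0, hu1]
      rw [hcA] at h
      nlinarith
  · rintro ⟨hlo, hhi⟩
    rw [hcB] at hlo
    rw [hcA] at hhi
    intro n
    constructor
    · refine chain_pos K α β (uSeq K M N) hurec hab hsum hβ0 ?_ ?_ n
      · rw [hu0]; exact hN
      · rw [hu0, hu1]; nlinarith
    · refine chain_pos K α β (vSeq K M N) hvrec hab hsum hβ0 ?_ ?_ n
      · rw [hv0]; exact hM
      · rw [hv1, hv0]
        -- need β*M ≤ (K-1)*M - K*N, i.e. K*N ≤ (K-1-β)*M
        have hprod : (K - 1 - β) * (β + 1) = K := by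
          linear_combination -β * hsum + hab
        have hcApos : 0 < K - 1 - β := by nlinarith
        have h3 : (K - 1 - β) * ((β + 1) * N) ≤ (K - 1 - β) * M :=
          mul_le_mul_of_nonneg_left hlo hcApos.le
        have h4 : (K - 1 - β) * ((β + 1) * N) = K * N := by
          rw [← mul_assoc, hprod]
        have h5 : (K - 1 - β) * M = (K - 1) * M - β * M := by ring
        linarith
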